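/- arXiv:2205.07344 — 4 statements merged into one kernel-verified Lean document; each statement's English description precedes it below -/
import Mathlib

section
/- Fix a stationary policy π and σ > 0, and define the smoothed robust Bellman operator on action-value functions by (T^π_σ Q)(s,a) = c(s,a) + γ(1−R)·Σ_{s'∈S} p(s'|s,a)·(Σ_{b∈A} π(b|s')·Q(s',b)) + γR·LSE(σ, V_Q), where V_Q ∈ ℝ^S is given by V_Q(s) = Σ_{b∈A} π(b|s)·Q(s,b). Then for all Q₁, Q₂ ∈ ℝ^{S×A}, ‖T^π_σ Q₁ − T^π_σ Q₂‖_∞ ≤ γ·‖Q₁ − Q₂‖_∞; in particular T^π_σ is a γ-contraction in the sup norm on ℝ^{S×A}. -/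
set_option autoImplicit false

open Finset

/-- Log-sum-exp: `LSE(σ, V) = (1/σ)·log (∑ s, exp (σ · V s))`. -/
noncomputable def lse {S : Type*} [Fintype S] (σ : ℝ) (V : S → ℝ) : ℝ :=
  (1 / σ) * Real.log (∑ s, Real.exp (σ * V s))

lemma lse_sub_le {S : Type*} [Fintype S] [Nonempty S] {σ : ℝ} (hσ : 0 < σ)
    (V W : S → ℝ) {M : ℝ} (h : ∀ s, V s - W s ≤ M) :
    lse σ V - lse σ W ≤ M := by
  have hBpos : 0 < ∑ s, Real.exp (σ * W s) :=
    Finset.sum_pos (fun s _ => Real.exp_pos _) Finset.univ_nonempty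
  have hApos : 0 < ∑ s, Real.exp (σ * V s) :=
    Finset.sum_pos (fun s _ => Real.exp_pos _) Finset.univ_nonempty
  have hAB : ∑ s, Real.exp (σ * V s) ≤ (∑ s, Real.exp (σ * W s)) * Real.exp (σ * M) := by
    rw [Finset.sum_mul]
    refine Finset.sum_le_sum fun s _ => ?_
    rw [← Real.exp_add]
    apply Real.exp_le_exp.2
    nlinarith [h s]
  have hlog : Real.log (∑ s, Real.exp (σ * V s)) ≤
      Real.log (∑ s, Real.exp (σ * W s)) + σ * M := by
    calc Real.log (∑ s, Real.exp (σ * V s))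
        ≤ Real.log ((∑ s, Real.exp (σ * W s)) * Real.exp (σ * M)) :=
          Real.log_le_log hApos hAB
      _ = _ := by rw [Real.log_mul (ne_of_gt hBpos) (Real.exp_ne_zero _), Real.log_exp]
  unfold lse
  have h2 : (1 / σ) * σ = 1 := one_div_mul_cancel hσ.ne'
  have h5 := mul_le_mul_of_nonneg_left hlog (le_of_lt (one_div_pos.2 hσ))
  rw [mul_add, ← mul_assoc, h2, one_mul] at h5
  linarith

lemma abs_lse_sub_le {S : Type*} [Fintype S] [Nonempty S] {σ : ℝ} (hσ : 0 < σ)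
    (V W : S → ℝ) {M : ℝ} (h : ∀ s, |V s - W s| ≤ M) :
    |lse σ V - lse σ W| ≤ M := by
  rw [abs_sub_le_iff]
  exact ⟨lse_sub_le hσ V W fun s => (abs_le.1 (h s)).2,
    lse_sub_le hσ W V fun s => by have := (abs_le.1 (h s)).1; linarith⟩

lemma avg_bound {A : Type*} [Fintype A] (w : A → ℝ) (hw : w ∈ stdSimplex ℝ A)
    (f g : A → ℝ) {M : ℝ} (h : ∀ b, |f b - g b| ≤ M) :
    |∑ b, w b * f b - ∑ b, w b * g b| ≤ M := by
  rw [← Finset.sum_sub_distrib]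
  calc |∑ b, (w b * f b - w b * g b)| ≤ ∑ b, |w b * f b - w b * g b| :=
        Finset.abs_sum_le_sum_abs _ _
    _ ≤ ∑ b, w b * M := Finset.sum_le_sum fun b _ => by
        rw [← mul_sub, abs_mul, abs_of_nonneg (hw.1 b)]
        exact mul_le_mul_of_nonneg_left (h b) (hw.1 b)
    _ = M := by rw [← Finset.sum_mul, hw.2, one_mul]

/-- **The smoothed robust Bellman operator on action-value functions is a `γ`-contraction.**
`(T^π_σ Q)(s,a) = c(s,a) + γ(1-R)·∑_{s'} p(s'|s,a)·(∑_b π(b|s')·Q(s',b)) + γR·LSE(σ, V_Q)`,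
with `V_Q(s) = ∑_b π(b|s)·Q(s,b)`; then `‖T^π_σ Q₁ - T^π_σ Q₂‖_∞ ≤ γ·‖Q₁ - Q₂‖_∞`
(sup norm on `ℝ^{S×A}`). -/
theorem stmt_1 {S A : Type*} [Fintype S] [Fintype A] [Nonempty S] [Nonempty A]
    (c : S → A → ℝ) (hc : ∀ s a, c s a ∈ Set.Icc (0 : ℝ) 1)
    (γ : ℝ) (hγ : γ ∈ Set.Ico (0 : ℝ) 1)
    (R : ℝ) (hR : R ∈ Set.Icc (0 : ℝ) 1)
    (p : S → A → S → ℝ) (hp : ∀ s a, p s a ∈ stdSimplex ℝ S)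
    (π : S → A → ℝ) (hπ : ∀ s, π s ∈ stdSimplex ℝ A)
    (σ : ℝ) (hσ : 0 < σ)
    (T : (S → A → ℝ) → S → A → ℝ)
    (hT : ∀ Q s a, T Q s a =
      c s a + γ * (1 - R) * ∑ s', p s a s' * ∑ b, π s' b * Q s' b
        + γ * R * lse σ (fun s' => ∑ b, π s' b * Q s' b))
    (Q₁ Q₂ : S → A → ℝ) :
    ‖T Q₁ - T Q₂‖ ≤ γ * ‖Q₁ - Q₂‖ := by
  set M := ‖Q₁ - Q₂‖ with hM
  have hMnn : (0:ℝ) ≤ M := norm_nonneg _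
  have hQ : ∀ s b, |Q₁ s b - Q₂ s b| ≤ M := by
    intro s b
    have h1 : ‖(Q₁ - Q₂) s‖ ≤ M := norm_le_pi_norm (Q₁ - Q₂) s
    have h2 : ‖(Q₁ - Q₂) s b‖ ≤ ‖(Q₁ - Q₂) s‖ := norm_le_pi_norm ((Q₁ - Q₂) s) b
    simpa [Real.norm_eq_abs] using h2.trans h1
  have hV : ∀ s, |(∑ b, π s b * Q₁ s b) - ∑ b, π s b * Q₂ s b| ≤ M :=
    fun s => avg_bound (π s) (hπ s) _ _ (hQ s)
  have hP : ∀ s a, |(∑ s', p s a s' * ∑ b, π s' b * Q₁ s' b)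
      - ∑ s', p s a s' * ∑ b, π s' b * Q₂ s' b| ≤ M :=
    fun s a => avg_bound (p s a) (hp s a) _ _ hV
  have hL : |lse σ (fun s' => ∑ b, π s' b * Q₁ s' b)
      - lse σ (fun s' => ∑ b, π s' b * Q₂ s' b)| ≤ M :=
    abs_lse_sub_le hσ _ _ hV
  have key : ∀ s a, |T Q₁ s a - T Q₂ s a| ≤ γ * M := by
    intro s a
    rw [hT, hT]
    have hPsa := hP s a
    have h1 : |γ * (1 - R) * ((∑ s', p s a s' * ∑ b, π s' b * Q₁ s' b)
        - ∑ s', p s a s' * ∑ b, π s' b * Q₂ s' b)| ≤ γ * (1 - R) * M := by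
      rw [abs_mul, abs_of_nonneg (by nlinarith [hγ.1, hR.2] : (0:ℝ) ≤ γ * (1 - R))]
      exact mul_le_mul_of_nonneg_left hPsa (by nlinarith [hγ.1, hR.2])
    have h2 : |γ * R * (lse σ (fun s' => ∑ b, π s' b * Q₁ s' b)
        - lse σ (fun s' => ∑ b, π s' b * Q₂ s' b))| ≤ γ * R * M := by
      rw [abs_mul, abs_of_nonneg (mul_nonneg hγ.1 hR.1)]
      exact mul_le_mul_of_nonneg_left hL (mul_nonneg hγ.1 hR.1)
    calc |(c s a + γ * (1 - R) * ∑ s', p s a s' * ∑ b, π s' b * Q₁ s' b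
          + γ * R * lse σ (fun s' => ∑ b, π s' b * Q₁ s' b))
        - (c s a + γ * (1 - R) * ∑ s', p s a s' * ∑ b, π s' b * Q₂ s' b
          + γ * R * lse σ (fun s' => ∑ b, π s' b * Q₂ s' b))|
        = |γ * (1 - R) * ((∑ s', p s a s' * ∑ b, π s' b * Q₁ s' b)
            - ∑ s', p s a s' * ∑ b, π s' b * Q₂ s' b)
          + γ * R * ((lse σ (fun s' => ∑ b, π s' b * Q₁ s' b))
            - lse σ (fun s' => ∑ b, π s' b * Q₂ s' b))| := by ring_nf
      _ ≤ _ := (abs_add_le _ _).trans (by nlinarith [h1, h2])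
  have hγM : (0:ℝ) ≤ γ * M := mul_nonneg hγ.1 hMnn
  rw [pi_norm_le_iff_of_nonneg hγM]
  intro s
  rw [pi_norm_le_iff_of_nonneg hγM]
  intro a
  simpa [Real.norm_eq_abs] using key s a
end

section
/- For every stationary policy π and every σ > 0: ‖V^π_σ − V^π‖_∞ ≤ γR·log|S| / ((1−γ)·σ) and ‖Q^π_σ − Q^π‖_∞ ≤ γR·log|S| / ((1−γ)·σ). -/
/-!
The two Bellman equations differ only in the robust term, `max V` versus `LSE(σ, V)`, and
`max V ≤ LSE(σ, V) ≤ max V + log|S| / σ`. Since `V = ∑ₐ π Q`, this gives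
`‖V_σ - V‖ ≤ ‖Q_σ - Q‖ ≤ γ ‖V_σ - V‖ + γ R log|S| / σ`, hence
`(1 - γ) ‖Q_σ - Q‖ ≤ γ R log|S| / σ`.
-/

set_option autoImplicit false

open Finset

lemma abs_apply_sub_le_norm {ι : Type*} [Fintype ι] (f g : ι → ℝ) (i : ι) :
    |f i - g i| ≤ ‖f - g‖ := by
  simpa only [Pi.sub_apply, Real.norm_eq_abs] using norm_le_pi_norm (f - g) i

lemma abs_sum_mul_sub_sum_mul_le_norm {ι : Type*} [Fintype ι] {w : ι → ℝ}
    (hw : w ∈ stdSimplex ℝ ι) (f g : ι → ℝ) :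
    |∑ i, w i * f i - ∑ i, w i * g i| ≤ ‖f - g‖ :=
  calc |∑ i, w i * f i - ∑ i, w i * g i| = |∑ i, w i * (f i - g i)| := by
        simp only [mul_sub, sum_sub_distrib]
    _ ≤ ∑ i, |w i * (f i - g i)| := abs_sum_le_sum_abs _ _
    _ ≤ ∑ i, w i * ‖f - g‖ := sum_le_sum fun i _ => by
        rw [abs_mul, abs_of_nonneg (hw.1 i)]
        exact mul_le_mul_of_nonneg_left (abs_apply_sub_le_norm f g i) (hw.1 i)
    _ = ‖f - g‖ := by rw [← sum_mul, hw.2, one_mul]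

lemma abs_sup'_sub_sup'_le_norm {ι : Type*} [Fintype ι] [Nonempty ι] (f g : ι → ℝ) :
    |univ.sup' univ_nonempty f - univ.sup' univ_nonempty g| ≤ ‖f - g‖ := by
  have sup'_le_sup'_add_norm : ∀ f g : ι → ℝ,
      univ.sup' univ_nonempty f ≤ univ.sup' univ_nonempty g + ‖f - g‖ := fun f g =>
    sup'_le _ _ fun i hi => by
      linarith [le_sup' g hi, (abs_le.mp (abs_apply_sub_le_norm f g i)).2]
  rw [abs_sub_le_iff]
  constructor
  · linarith [sup'_le_sup'_add_norm f g]
  · linarith [sup'_le_sup'_add_norm g f, norm_sub_rev f g]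

section LogSumExp

variable {S : Type*} [Fintype S] [Nonempty S] {σ : ℝ}

lemma sup'_le_lse (hσ : 0 < σ) (V : S → ℝ) : univ.sup' univ_nonempty V ≤ lse σ V := by
  obtain ⟨s₀, -, hs₀⟩ := exists_mem_eq_sup' (univ_nonempty (α := S)) V
  rw [hs₀, lse, one_div_mul_eq_div, le_div_iff₀ hσ, mul_comm,
    Real.le_log_iff_exp_le (sum_pos (fun _ _ => Real.exp_pos _) univ_nonempty)]
  exact single_le_sum (f := fun s => Real.exp (σ * V s)) (fun _ _ => (Real.exp_pos _).le)
    (mem_univ s₀)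

lemma lse_le_sup'_add (hσ : 0 < σ) (V : S → ℝ) :
    lse σ V ≤ univ.sup' univ_nonempty V + Real.log (Fintype.card S) / σ := by
  set M := univ.sup' univ_nonempty V
  have hsum : ∑ s, Real.exp (σ * V s) ≤ Fintype.card S * Real.exp (σ * M) :=
    calc ∑ s, Real.exp (σ * V s) ≤ ∑ _s : S, Real.exp (σ * M) :=
          sum_le_sum fun s _ => Real.exp_le_exp.mpr
            (mul_le_mul_of_nonneg_left (le_sup' V (mem_univ s)) hσ.le)
      _ = Fintype.card S * Real.exp (σ * M) := by simp
  have hlog : Real.log (∑ s, Real.exp (σ * V s)) ≤ Real.log (Fintype.card S) + σ * M := by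
    rw [← Real.log_exp (σ * M), ← Real.log_mul (by positivity) (Real.exp_ne_zero _)]
    exact Real.log_le_log (sum_pos (fun _ _ => Real.exp_pos _) univ_nonempty) hsum
  rw [lse, one_div_mul_eq_div, div_le_iff₀ hσ, add_mul, div_mul_cancel₀ _ hσ.ne']
  linarith

lemma abs_lse_sub_sup'_le (hσ : 0 < σ) (f g : S → ℝ) :
    |lse σ f - univ.sup' univ_nonempty g| ≤ ‖f - g‖ + Real.log (Fintype.card S) / σ := by
  have hsup := abs_le.mp (abs_sup'_sub_sup'_le_norm f g)
  have hlog : 0 ≤ Real.log (Fintype.card S) / σ :=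
    div_nonneg (Real.log_nonneg (by exact_mod_cast Fintype.card_pos)) hσ.le
  rw [abs_le]
  constructor <;> linarith [sup'_le_lse hσ f, lse_le_sup'_add hσ f]

end LogSumExp

section RobustMDP

variable {S A : Type*} [Fintype S] [Fintype A]

lemma norm_sub_le_norm_sub_of_eq_sum_mul {π : S → A → ℝ} (hπ : ∀ s, π s ∈ stdSimplex ℝ A)
    {V V' : S → ℝ} {Q Q' : S → A → ℝ} (hV : ∀ s, V s = ∑ a, π s a * Q s a)
    (hV' : ∀ s, V' s = ∑ a, π s a * Q' s a) : ‖V' - V‖ ≤ ‖Q' - Q‖ := by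
  refine (pi_norm_le_iff_of_nonneg (norm_nonneg _)).mpr fun s => ?_
  rw [Pi.sub_apply, Real.norm_eq_abs, hV s, hV' s]
  exact (abs_sum_mul_sub_sum_mul_le_norm (hπ s) _ _).trans (norm_le_pi_norm (Q' - Q) s)

variable [Nonempty S] {c : S → A → ℝ} {γ R σ : ℝ} {p : S → A → S → ℝ}

lemma norm_smoothed_sub_robust_action_value_le (hγ : 0 ≤ γ) (hR : R ∈ Set.Icc (0 : ℝ) 1)
    (hp : ∀ s a, p s a ∈ stdSimplex ℝ S) (hσ : 0 < σ) {V Vσ : S → ℝ} {Q Qσ : S → A → ℝ}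
    (hQ : ∀ s a, Q s a = c s a + γ * (1 - R) * ∑ s', p s a s' * V s'
      + γ * R * univ.sup' univ_nonempty V)
    (hQσ : ∀ s a, Qσ s a = c s a + γ * (1 - R) * ∑ s', p s a s' * Vσ s'
      + γ * R * lse σ Vσ) :
    ‖Qσ - Q‖ ≤ γ * ‖Vσ - V‖ + γ * R * (Real.log (Fintype.card S) / σ) := by
  set D := ‖Vσ - V‖
  set L := Real.log (Fintype.card S)
  have hγR : 0 ≤ γ * (1 - R) := mul_nonneg hγ (by linarith [hR.2])
  have hγR' : 0 ≤ γ * R := mul_nonneg hγ hR.1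
  have hL : 0 ≤ L := Real.log_nonneg (by exact_mod_cast Fintype.card_pos)
  have hbound : 0 ≤ γ * D + γ * R * (L / σ) := by positivity
  refine (pi_norm_le_iff_of_nonneg hbound).mpr fun s =>
    (pi_norm_le_iff_of_nonneg hbound).mpr fun a => ?_
  have hdiff : Qσ s a - Q s a = γ * (1 - R) * (∑ s', p s a s' * Vσ s' - ∑ s', p s a s' * V s')
      + γ * R * (lse σ Vσ - univ.sup' univ_nonempty V) := by
    rw [hQσ, hQ]; ring
  calc ‖(Qσ - Q) s a‖ = |Qσ s a - Q s a| := Real.norm_eq_abs _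
    _ ≤ γ * (1 - R) * |∑ s', p s a s' * Vσ s' - ∑ s', p s a s' * V s'|
        + γ * R * |lse σ Vσ - univ.sup' univ_nonempty V| := by
      rw [hdiff]
      refine (abs_add_le _ _).trans_eq ?_
      rw [abs_mul, abs_mul (γ * R), abs_of_nonneg hγR, abs_of_nonneg hγR']
    _ ≤ γ * (1 - R) * D + γ * R * (D + L / σ) := by
      gcongr
      exacts [abs_sum_mul_sub_sum_mul_le_norm (hp s a) Vσ V, abs_lse_sub_sup'_le hσ Vσ V]
    _ = γ * D + γ * R * (L / σ) := by ring

end RobustMDP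

theorem stmt_2_general {S A : Type*} [Fintype S] [Fintype A] [Nonempty S]
    (c : S → A → ℝ)
    (γ : ℝ) (hγ : γ ∈ Set.Ico (0 : ℝ) 1)
    (R : ℝ) (hR : R ∈ Set.Icc (0 : ℝ) 1)
    (p : S → A → S → ℝ) (hp : ∀ s a, p s a ∈ stdSimplex ℝ S)
    (π : S → A → ℝ) (hπ : ∀ s, π s ∈ stdSimplex ℝ A)
    (σ : ℝ) (hσ : 0 < σ)
    (V Vσ : S → ℝ) (Q Qσ : S → A → ℝ)
    (hV : ∀ s, V s = ∑ a, π s a * (c s a + γ * (1 - R) * ∑ s', p s a s' * V s'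
      + γ * R * univ.sup' univ_nonempty V))
    (hVσ : ∀ s, Vσ s = ∑ a, π s a * (c s a + γ * (1 - R) * ∑ s', p s a s' * Vσ s'
      + γ * R * lse σ Vσ))
    (hQ : ∀ s a, Q s a = c s a + γ * (1 - R) * ∑ s', p s a s' * V s'
      + γ * R * univ.sup' univ_nonempty V)
    (hQσ : ∀ s a, Qσ s a = c s a + γ * (1 - R) * ∑ s', p s a s' * Vσ s'
      + γ * R * lse σ Vσ) :
    ‖Vσ - V‖ ≤ γ * R * Real.log (Fintype.card S) / ((1 - γ) * σ) ∧
      ‖Qσ - Q‖ ≤ γ * R * Real.log (Fintype.card S) / ((1 - γ) * σ) := by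
  have hVQ : ‖Vσ - V‖ ≤ ‖Qσ - Q‖ :=
    norm_sub_le_norm_sub_of_eq_sum_mul hπ (fun s => by rw [hV s]; simp only [hQ])
      (fun s => by rw [hVσ s]; simp only [hQσ])
  have hQV := norm_smoothed_sub_robust_action_value_le hγ.1 hR hp hσ hQ hQσ
  have hQbound : ‖Qσ - Q‖ ≤ γ * R * Real.log (Fintype.card S) / ((1 - γ) * σ) := by
    have hfix : (1 - γ) * ‖Qσ - Q‖ ≤ γ * R * (Real.log (Fintype.card S) / σ) := by
      linarith [mul_le_mul_of_nonneg_left hVQ hγ.1]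
    rw [le_div_iff₀ (mul_pos (sub_pos.mpr hγ.2) hσ)]
    calc ‖Qσ - Q‖ * ((1 - γ) * σ) = (1 - γ) * ‖Qσ - Q‖ * σ := by ring
      _ ≤ γ * R * (Real.log (Fintype.card S) / σ) * σ := by gcongr
      _ = γ * R * Real.log (Fintype.card S) := by field_simp
  exact ⟨hVQ.trans hQbound, hQbound⟩

/-- **Approximation error of the smoothed robust value functions.**
If `V^π` is the (unique) fixed point of the robust Bellman operator of `π`,
`V^π_σ` is the fixed point of the smoothed robust Bellman operator, and
`Q^π`, `Q^π_σ` are the corresponding (smoothed) robust action-value functions, then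
`‖V^π_σ - V^π‖_∞ ≤ γR·log|S| / ((1-γ)σ)` and `‖Q^π_σ - Q^π‖_∞ ≤ γR·log|S| / ((1-γ)σ)`. -/
theorem stmt_2 {S A : Type*} [Fintype S] [Fintype A] [Nonempty S] [Nonempty A]
    (c : S → A → ℝ) (hc : ∀ s a, c s a ∈ Set.Icc (0 : ℝ) 1)
    (γ : ℝ) (hγ : γ ∈ Set.Ico (0 : ℝ) 1)
    (R : ℝ) (hR : R ∈ Set.Icc (0 : ℝ) 1)
    (p : S → A → S → ℝ) (hp : ∀ s a, p s a ∈ stdSimplex ℝ S)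
    (π : S → A → ℝ) (hπ : ∀ s, π s ∈ stdSimplex ℝ A)
    (σ : ℝ) (hσ : 0 < σ)
    (V Vσ : S → ℝ) (Q Qσ : S → A → ℝ)
    (hV : ∀ s, V s = ∑ a, π s a * (c s a + γ * (1 - R) * ∑ s', p s a s' * V s'
      + γ * R * univ.sup' univ_nonempty V))
    (hVσ : ∀ s, Vσ s = ∑ a, π s a * (c s a + γ * (1 - R) * ∑ s', p s a s' * Vσ s'
      + γ * R * lse σ Vσ))
    (hQ : ∀ s a, Q s a = c s a + γ * (1 - R) * ∑ s', p s a s' * V s'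
      + γ * R * univ.sup' univ_nonempty V)
    (hQσ : ∀ s a, Qσ s a = c s a + γ * (1 - R) * ∑ s', p s a s' * Vσ s'
      + γ * R * lse σ Vσ) :
    ‖Vσ - V‖ ≤ γ * R * Real.log (Fintype.card S) / ((1 - γ) * σ) ∧
      ‖Qσ - Q‖ ≤ γ * R * Real.log (Fintype.card S) / ((1 - γ) * σ) :=
  stmt_2_general c γ hγ R hR p hp π hπ σ hσ V Vσ Q Qσ hV hVσ hQ hQσ
end

section
/- Under Assumption 1, with L_V = k_π·|A|/(1−γ)²: for all θ₁, θ₂ ∈ Θ, every s ∈ S, a ∈ A, and every probability distribution ρ on S, |Q^{π_{θ₁}}(s,a) − Q^{π_{θ₂}}(s,a)| ≤ L_V·‖θ₁ − θ₂‖ and |J_ρ(θ₁) − J_ρ(θ₂)| ≤ L_V·‖θ₁ − θ₂‖. -/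
set_option autoImplicit false

open Finset

/-- **Lipschitz continuity of the robust action-value function and the robust objective in the
policy parameter**: under Assumption 1, with `L_V = k_π·|A|/(1-γ)²`, for all `θ₁, θ₂ ∈ Θ`,
all `s, a`, and any distribution `ρ` on `S`,
`|Q^{π_{θ₁}}(s,a) - Q^{π_{θ₂}}(s,a)| ≤ L_V·‖θ₁-θ₂‖` and `|J_ρ(θ₁) - J_ρ(θ₂)| ≤ L_V·‖θ₁-θ₂‖`. -/
theorem stmt_4 {S A : Type*} [Fintype S] [Fintype A] [Nonempty S] [Nonempty A] {N : ℕ}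
    (c : S → A → ℝ) (hc : ∀ s a, c s a ∈ Set.Icc (0 : ℝ) 1)
    (γ : ℝ) (hγ : γ ∈ Set.Ico (0 : ℝ) 1)
    (R : ℝ) (hR : R ∈ Set.Icc (0 : ℝ) 1)
    (p : S → A → S → ℝ) (hp : ∀ s a, p s a ∈ stdSimplex ℝ S)
    (Θ : Set (EuclideanSpace ℝ (Fin N))) (hΘ : Convex ℝ Θ)
    (π : EuclideanSpace ℝ (Fin N) → S → A → ℝ)
    (hπ : ∀ θ ∈ Θ, ∀ s, π θ s ∈ stdSimplex ℝ A)
    (kπ : ℝ) (hkπ : 0 < kπ)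
    (D : EuclideanSpace ℝ (Fin N) → S → A → EuclideanSpace ℝ (Fin N))
    (hD : ∀ θ ∈ Θ, ∀ s a, HasGradientWithinAt (fun θ' => π θ' s a) (D θ s a) Θ θ)
    (hDb : ∀ θ ∈ Θ, ∀ s a, ‖D θ s a‖ ≤ kπ)
    (V : EuclideanSpace ℝ (Fin N) → S → ℝ)
    (hV : ∀ θ ∈ Θ, ∀ s, V θ s = ∑ a, π θ s a * (c s a
      + γ * (1 - R) * ∑ s', p s a s' * V θ s'
      + γ * R * univ.sup' univ_nonempty (V θ)))
    (Q : EuclideanSpace ℝ (Fin N) → S → A → ℝ)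
    (hQ : ∀ θ ∈ Θ, ∀ s a, Q θ s a = c s a + γ * (1 - R) * ∑ s', p s a s' * V θ s'
      + γ * R * univ.sup' univ_nonempty (V θ))
    (ρ : S → ℝ) (hρ : ρ ∈ stdSimplex ℝ S)
    (J : EuclideanSpace ℝ (Fin N) → ℝ) (hJ : ∀ θ, J θ = ∑ s, ρ s * V θ s)
    (LV : ℝ) (hLV : LV = kπ * Fintype.card A / (1 - γ) ^ 2)
    (θ₁ θ₂ : EuclideanSpace ℝ (Fin N)) (h₁ : θ₁ ∈ Θ) (h₂ : θ₂ ∈ Θ) :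
    (∀ s a, |Q θ₁ s a - Q θ₂ s a| ≤ LV * ‖θ₁ - θ₂‖) ∧
      |J θ₁ - J θ₂| ≤ LV * ‖θ₁ - θ₂‖ := by
  obtain ⟨hγ0, hγ1⟩ := hγ
  obtain ⟨hR0, hR1⟩ := hR
  have h1γ : (0:ℝ) < 1 - γ := by linarith
  have hγR : (0:ℝ) ≤ γ * (1 - R) := mul_nonneg hγ0 (by linarith)
  have hγR' : (0:ℝ) ≤ γ * R := mul_nonneg hγ0 hR0
  set n : ℝ := ‖θ₁ - θ₂‖ with hn
  have hn0 : 0 ≤ n := norm_nonneg _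
  obtain ⟨B, hB, hB0⟩ : ∃ B : ℝ, (1 - γ) * B = 1 ∧ 0 ≤ B :=
    ⟨1 / (1 - γ), by field_simp, by positivity⟩
  -- policy Lipschitz
  have hπLip : ∀ s a, |π θ₁ s a - π θ₂ s a| ≤ kπ * n := by
    intro s a
    have := hΘ.norm_image_sub_le_of_norm_hasFDerivWithin_le
      (f := fun θ' => π θ' s a)
      (f' := fun θ => (InnerProductSpace.toDual ℝ (EuclideanSpace ℝ (Fin N))) (D θ s a))
      (fun θ hθ => (hD θ hθ s a).hasFDerivWithinAt)
      (fun θ hθ => by rw [LinearIsometryEquiv.norm_map]; exact hDb θ hθ s a) h₂ h₁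
    simpa [Real.norm_eq_abs] using this
  have hp0 : ∀ s a s', 0 ≤ p s a s' := fun s a s' => (hp s a).1 s'
  have hp1 : ∀ s a, ∑ s', p s a s' = 1 := fun s a => (hp s a).2
  -- V bounds
  have hVbnd : ∀ θ, θ ∈ Θ → ∀ s, 0 ≤ V θ s ∧ V θ s ≤ B := by
    intro θ hθ
    set M := univ.sup' univ_nonempty (V θ) with hM
    have hsumπ : ∀ s, ∑ a, π θ s a = 1 := fun s => (hπ θ hθ s).2
    have hπ0 : ∀ s a, 0 ≤ π θ s a := fun s a => (hπ θ hθ s).1 a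
    have hVleM : ∀ s, V θ s ≤ M := fun s => le_sup' _ (mem_univ s)
    obtain ⟨s₀, -, hs₀⟩ := Finset.exists_mem_eq_sup' (univ_nonempty) (V θ)
    have hs₀' : M = V θ s₀ := hM.trans hs₀
    set m := univ.inf' univ_nonempty (V θ) with hm
    have hmle : ∀ s, m ≤ V θ s := fun s => inf'_le _ (mem_univ s)
    obtain ⟨s₁, -, hs₁⟩ := Finset.exists_mem_eq_inf' (univ_nonempty) (V θ)
    have hs₁' : m = V θ s₁ := hm.trans hs₁
    clear_value M m
    have hmM : m ≤ M := le_trans (hmle (Classical.arbitrary S)) (hVleM _)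
    have hpV_le : ∀ s a, ∑ s', p s a s' * V θ s' ≤ M := by
      intro s a
      calc ∑ s', p s a s' * V θ s' ≤ ∑ s', p s a s' * M :=
            Finset.sum_le_sum fun s' _ => mul_le_mul_of_nonneg_left (hVleM s') (hp0 s a s')
        _ = M := by rw [← Finset.sum_mul, hp1, one_mul]
    have hpV_ge : ∀ s a, m ≤ ∑ s', p s a s' * V θ s' := by
      intro s a
      calc m = ∑ s', p s a s' * m := by rw [← Finset.sum_mul, hp1, one_mul]
        _ ≤ ∑ s', p s a s' * V θ s' :=
          Finset.sum_le_sum fun s' _ => mul_le_mul_of_nonneg_left (hmle s') (hp0 s a s')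
    have hMub : M ≤ B := by
      have h1 : V θ s₀ ≤ 1 + γ * M := by
        rw [hV θ hθ s₀, ← hM]
        calc ∑ a, π θ s₀ a * (c s₀ a + γ * (1 - R) * ∑ s', p s₀ a s' * V θ s' + γ * R * M)
            ≤ ∑ a, π θ s₀ a * (1 + γ * M) := by
              refine Finset.sum_le_sum fun a _ => mul_le_mul_of_nonneg_left ?_ (hπ0 s₀ a)
              have hca := hc s₀ a
              have t1 : γ * (1 - R) * (∑ s', p s₀ a s' * V θ s') ≤ γ * (1 - R) * M :=
                mul_le_mul_of_nonneg_left (hpV_le s₀ a) hγR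
              have t2 : γ * (1 - R) * M + γ * R * M = γ * M := by ring
              linarith [hca.2]
          _ = 1 + γ * M := by rw [← Finset.sum_mul, hsumπ, one_mul]
      have hMle : M ≤ 1 + γ * M := by rw [← hs₀'] at h1; exact h1
      nlinarith [hB, h1γ]
    have hm0 : 0 ≤ m := by
      have h1 : γ * m ≤ V θ s₁ := by
        rw [hV θ hθ s₁, ← hM]
        calc (γ * m : ℝ) = ∑ a, π θ s₁ a * (γ * m) := by rw [← Finset.sum_mul, hsumπ, one_mul]
          _ ≤ ∑ a, π θ s₁ a * (c s₁ a + γ * (1 - R) * ∑ s', p s₁ a s' * V θ s' + γ * R * M) := by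
              refine Finset.sum_le_sum fun a _ => mul_le_mul_of_nonneg_left ?_ (hπ0 s₁ a)
              have hca := hc s₁ a
              have t1 : γ * (1 - R) * m ≤ γ * (1 - R) * (∑ s', p s₁ a s' * V θ s') :=
                mul_le_mul_of_nonneg_left (hpV_ge s₁ a) hγR
              have t2 : γ * R * m ≤ γ * R * M := mul_le_mul_of_nonneg_left hmM hγR'
              have t3 : γ * (1 - R) * m + γ * R * m = γ * m := by ring
              linarith [hca.1]
      have : γ * m ≤ m := by rw [← hs₁'] at h1; exact h1
      nlinarith [h1γ]
    intro s
    exact ⟨le_trans hm0 (hmle s), le_trans (hVleM s) hMub⟩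
  -- sup bounds
  have hsupbnd : ∀ θ, θ ∈ Θ → 0 ≤ univ.sup' univ_nonempty (V θ) ∧
      univ.sup' univ_nonempty (V θ) ≤ B := by
    intro θ hθ
    obtain ⟨s₀, -, hs₀⟩ := Finset.exists_mem_eq_sup' (univ_nonempty) (V θ)
    rw [hs₀]; exact hVbnd θ hθ s₀
  -- Q bound for θ₁
  have hQbnd : ∀ s a, |Q θ₁ s a| ≤ B := by
    intro s a
    rw [hQ θ₁ h₁ s a]
    have hX0 : 0 ≤ ∑ s', p s a s' * V θ₁ s' :=
      Finset.sum_nonneg fun s' _ => mul_nonneg (hp0 s a s') (hVbnd θ₁ h₁ s').1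
    have hXB : ∑ s', p s a s' * V θ₁ s' ≤ B := by
      calc ∑ s', p s a s' * V θ₁ s' ≤ ∑ s', p s a s' * B :=
            Finset.sum_le_sum fun s' _ => mul_le_mul_of_nonneg_left (hVbnd θ₁ h₁ s').2 (hp0 s a s')
        _ = B := by rw [← Finset.sum_mul, hp1, one_mul]
    obtain ⟨hY0, hYB⟩ := hsupbnd θ₁ h₁
    have hca := hc s a
    have t1 : γ * (1 - R) * (∑ s', p s a s' * V θ₁ s') ≤ γ * (1 - R) * B :=
      mul_le_mul_of_nonneg_left hXB hγR
    have t2 : γ * R * univ.sup' univ_nonempty (V θ₁) ≤ γ * R * B :=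
      mul_le_mul_of_nonneg_left hYB hγR'
    have t3 : γ * (1 - R) * B + γ * R * B = γ * B := by ring
    have u1 : 0 ≤ γ * (1 - R) * (∑ s', p s a s' * V θ₁ s') := mul_nonneg hγR hX0
    have u2 : 0 ≤ γ * R * univ.sup' univ_nonempty (V θ₁) := mul_nonneg hγR' hY0
    rw [abs_le]
    constructor
    · linarith [hca.1]
    · linarith [hca.2, hB]
  -- the sup of |V₁ - V₂|
  set W : S → ℝ := fun s => |V θ₁ s - V θ₂ s| with hWdef
  set Dv := univ.sup' univ_nonempty W with hDvdef
  have hWle : ∀ s, |V θ₁ s - V θ₂ s| ≤ Dv := fun s => le_sup' W (mem_univ s)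
  obtain ⟨s₂, -, hs₂⟩ := Finset.exists_mem_eq_sup' (univ_nonempty) W
  have hDvs : Dv = |V θ₁ s₂ - V θ₂ s₂| := hDvdef.trans hs₂
  clear_value Dv
  have hDv0 : 0 ≤ Dv := le_trans (abs_nonneg _) (hWle (Classical.arbitrary S))
  have hsupdiff : |univ.sup' univ_nonempty (V θ₁) - univ.sup' univ_nonempty (V θ₂)| ≤ Dv := by
    rw [abs_le]
    constructor
    · have : univ.sup' univ_nonempty (V θ₂) ≤ univ.sup' univ_nonempty (V θ₁) + Dv := by
        refine Finset.sup'_le _ _ fun s _ => ?_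
        have ha : V θ₂ s - V θ₁ s ≤ Dv :=
          le_trans (le_abs_self _) (by rw [abs_sub_comm]; exact hWle s)
        have hb : V θ₁ s ≤ univ.sup' univ_nonempty (V θ₁) := le_sup' _ (mem_univ s)
        linarith
      linarith
    · have : univ.sup' univ_nonempty (V θ₁) ≤ univ.sup' univ_nonempty (V θ₂) + Dv := by
        refine Finset.sup'_le _ _ fun s _ => ?_
        have ha : V θ₁ s - V θ₂ s ≤ Dv := le_trans (le_abs_self _) (hWle s)
        have hb : V θ₂ s ≤ univ.sup' univ_nonempty (V θ₂) := le_sup' _ (mem_univ s)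
        linarith
      linarith
  have hpdiff : ∀ s a, |∑ s', p s a s' * V θ₁ s' - ∑ s', p s a s' * V θ₂ s'| ≤ Dv := by
    intro s a
    rw [← Finset.sum_sub_distrib]
    calc |∑ s', (p s a s' * V θ₁ s' - p s a s' * V θ₂ s')|
        ≤ ∑ s', |p s a s' * V θ₁ s' - p s a s' * V θ₂ s'| := Finset.abs_sum_le_sum_abs _ _
      _ = ∑ s', p s a s' * |V θ₁ s' - V θ₂ s'| := by
          refine Finset.sum_congr rfl fun s' _ => ?_
          rw [← mul_sub, abs_mul, abs_of_nonneg (hp0 s a s')]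
      _ ≤ ∑ s', p s a s' * Dv :=
          Finset.sum_le_sum fun s' _ => mul_le_mul_of_nonneg_left (hWle s') (hp0 s a s')
      _ = Dv := by rw [← Finset.sum_mul, hp1, one_mul]
  -- Q difference bound
  have hQdiff : ∀ s a, |Q θ₁ s a - Q θ₂ s a| ≤ γ * Dv := by
    intro s a
    have e : Q θ₁ s a - Q θ₂ s a =
        γ * (1 - R) * ((∑ s', p s a s' * V θ₁ s') - ∑ s', p s a s' * V θ₂ s')
        + γ * R * (univ.sup' univ_nonempty (V θ₁) - univ.sup' univ_nonempty (V θ₂)) := by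
      rw [hQ θ₁ h₁ s a, hQ θ₂ h₂ s a]; ring
    rw [e]
    have h1 : |γ * (1 - R) * ((∑ s', p s a s' * V θ₁ s') - ∑ s', p s a s' * V θ₂ s')|
        ≤ γ * (1 - R) * Dv := by
      rw [abs_mul, abs_of_nonneg hγR]
      exact mul_le_mul_of_nonneg_left (hpdiff s a) hγR
    have h2 : |γ * R * (univ.sup' univ_nonempty (V θ₁) - univ.sup' univ_nonempty (V θ₂))|
        ≤ γ * R * Dv := by
      rw [abs_mul, abs_of_nonneg hγR']
      exact mul_le_mul_of_nonneg_left hsupdiff hγR'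
    calc _ ≤ _ + _ := abs_add_le _ _
      _ ≤ γ * (1 - R) * Dv + γ * R * Dv := add_le_add h1 h2
      _ = γ * Dv := by ring
  -- V as sum of π * Q
  have hVQ : ∀ θ, θ ∈ Θ → ∀ s, V θ s = ∑ a, π θ s a * Q θ s a := by
    intro θ hθ s
    rw [hV θ hθ s]
    exact Finset.sum_congr rfl fun a _ => by rw [hQ θ hθ s a]
  set K : ℝ := kπ * Fintype.card A * n with hKdef
  have hVdiff : ∀ s, |V θ₁ s - V θ₂ s| ≤ K * B + γ * Dv := by
    intro s
    have e : V θ₁ s - V θ₂ s = (∑ a, (π θ₁ s a - π θ₂ s a) * Q θ₁ s a)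
        + ∑ a, π θ₂ s a * (Q θ₁ s a - Q θ₂ s a) := by
      rw [hVQ θ₁ h₁ s, hVQ θ₂ h₂ s, ← Finset.sum_add_distrib, ← Finset.sum_sub_distrib]
      exact Finset.sum_congr rfl fun a _ => by ring
    rw [e]
    have h1 : |∑ a, (π θ₁ s a - π θ₂ s a) * Q θ₁ s a| ≤ K * B := by
      calc |∑ a, (π θ₁ s a - π θ₂ s a) * Q θ₁ s a|
          ≤ ∑ a, |(π θ₁ s a - π θ₂ s a) * Q θ₁ s a| := Finset.abs_sum_le_sum_abs _ _
        _ ≤ ∑ _a : A, (kπ * n) * B := by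
            refine Finset.sum_le_sum fun a _ => ?_
            rw [abs_mul]
            exact mul_le_mul (hπLip s a) (hQbnd s a) (abs_nonneg _) (by positivity)
        _ = K * B := by
            rw [Finset.sum_const, card_univ, nsmul_eq_mul, hKdef]; ring
    have h2 : |∑ a, π θ₂ s a * (Q θ₁ s a - Q θ₂ s a)| ≤ γ * Dv := by
      have hπ0 : ∀ a, 0 ≤ π θ₂ s a := fun a => (hπ θ₂ h₂ s).1 a
      calc |∑ a, π θ₂ s a * (Q θ₁ s a - Q θ₂ s a)|
          ≤ ∑ a, |π θ₂ s a * (Q θ₁ s a - Q θ₂ s a)| := Finset.abs_sum_le_sum_abs _ _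
        _ = ∑ a, π θ₂ s a * |Q θ₁ s a - Q θ₂ s a| := by
            refine Finset.sum_congr rfl fun a _ => ?_
            rw [abs_mul, abs_of_nonneg (hπ0 a)]
        _ ≤ ∑ a, π θ₂ s a * (γ * Dv) :=
            Finset.sum_le_sum fun a _ => mul_le_mul_of_nonneg_left (hQdiff s a) (hπ0 a)
        _ = γ * Dv := by rw [← Finset.sum_mul, (hπ θ₂ h₂ s).2, one_mul]
    calc _ ≤ _ + _ := abs_add_le _ _
      _ ≤ K * B + γ * Dv := add_le_add h1 h2
  have hDvle : Dv ≤ K * B + γ * Dv := by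
    calc Dv = |V θ₁ s₂ - V θ₂ s₂| := hDvs
      _ ≤ K * B + γ * Dv := hVdiff s₂
  have hK0 : 0 ≤ K := by positivity
  have hDvLV : Dv ≤ LV * n := by
    have h5 : Dv * (1 - γ) ≤ K * B := by linarith
    have h6 : Dv * (1 - γ) * (1 - γ) ≤ K * B * (1 - γ) :=
      mul_le_mul_of_nonneg_right h5 h1γ.le
    have h7 : K * B * (1 - γ) = K := by
      rw [mul_assoc, mul_comm B (1 - γ), hB, mul_one]
    have h8 : Dv * (1 - γ) ^ 2 ≤ K := by
      calc Dv * (1 - γ) ^ 2 = Dv * (1 - γ) * (1 - γ) := by ring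
        _ ≤ K * B * (1 - γ) := h6
        _ = K := h7
    rw [hLV, div_mul_eq_mul_div, le_div_iff₀ (by positivity : (0:ℝ) < (1 - γ) ^ 2)]
    calc Dv * (1 - γ) ^ 2 ≤ K := h8
      _ = kπ * (Fintype.card A : ℝ) * n := hKdef
  constructor
  · intro s a
    calc |Q θ₁ s a - Q θ₂ s a| ≤ γ * Dv := hQdiff s a
      _ ≤ Dv := by nlinarith
      _ ≤ LV * n := hDvLV
  · have hρ0 : ∀ s, 0 ≤ ρ s := fun s => hρ.1 s
    have hJle : |J θ₁ - J θ₂| ≤ Dv := by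
      rw [hJ θ₁, hJ θ₂, ← Finset.sum_sub_distrib]
      calc |∑ s, (ρ s * V θ₁ s - ρ s * V θ₂ s)|
          ≤ ∑ s, |ρ s * V θ₁ s - ρ s * V θ₂ s| := Finset.abs_sum_le_sum_abs _ _
        _ = ∑ s, ρ s * |V θ₁ s - V θ₂ s| := by
            refine Finset.sum_congr rfl fun s _ => ?_
            rw [← mul_sub, abs_mul, abs_of_nonneg (hρ0 s)]
        _ ≤ ∑ s, ρ s * Dv :=
            Finset.sum_le_sum fun s _ => mul_le_mul_of_nonneg_left (hWle s) (hρ0 s)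
        _ = Dv := by rw [← Finset.sum_mul, hρ.2, one_mul]
    exact le_trans hJle hDvLV
end

section
/- Robust value-difference identity: for any two stationary policies π₁ and π₂ and every s ∈ S, V^{π₁}(s) − V^{π₂}(s) = (1/(1−γ+γR))·Σ_{s'∈S} d^{π₂}_s(s')·Σ_{a∈A} (π₁(a|s') − π₂(a|s'))·Q^{π₁}(s',a) + (γR/(1−γ+γR))·(max_{s'} V^{π₁}(s') − max_{s'} V^{π₂}(s')). -/
set_option autoImplicit false

open Finset

/-- The stochastic matrix of a policy `π` under the kernel `p`:
`P_π(s,s') = ∑ a, π(a|s)·p(s'|s,a)`. -/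
noncomputable def pmat {S A : Type*} [Fintype A] (π : S → A → ℝ) (p : S → A → S → ℝ) :
    Matrix S S ℝ :=
  Matrix.of fun s s' => ∑ a, π s a * p s a s'

/-- The discounted visitation distribution
`d^π_s(s') = (1-γ+γR)·∑_{t≥0} (γ(1-R))^t·(P_π^t)(s,s')`. -/
noncomputable def dvisit {S A : Type*} [Fintype S] [Fintype A] [DecidableEq S]
    (γ R : ℝ) (π : S → A → ℝ) (p : S → A → S → ℝ) (s s' : S) : ℝ :=
  (1 - γ + γ * R) * ∑' t : ℕ, (γ * (1 - R)) ^ t * ((pmat π p) ^ t) s s'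

/-! Subtracting the robust Bellman equations of `π₁` and `π₂` shows that the gap `D = V₁ - V₂`
solves the linear equation `D = w + γ(1-R)·P_{π₂} D`, where `w(s') = ∑ₐ (π₁ - π₂)(a|s')·Q₁(s',a)
+ γR·(max V₁ - max V₂)`. As `P_{π₂}` is row-stochastic and `γ(1-R) < 1`, the Neumann series
`N = ∑ₜ (γ(1-R)·P_{π₂})ᵗ` inverts `1 - γ(1-R)·P_{π₂}`, so `D = N w`. Finally
`N = d^{π₂}/(1-γ+γR)` entrywise and `N` has constant row sums `1/(1-γ+γR)`. -/

open Matrix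

namespace Matrix

variable {n : Type*} [Fintype n] [DecidableEq n]

theorem eq_tsum_pow_mulVec_of_eq_add_mulVec {R : Type*} [Ring R] [TopologicalSpace R]
    [IsTopologicalRing R] [T2Space R] {M : Matrix n n R} (hM : Summable (M ^ ·))
    {v w : n → R} (hv : v = w + M *ᵥ v) : v = (∑' t, M ^ t) *ᵥ w := by
  have hw : w = (1 - M) *ᵥ v := by
    rw [sub_mulVec, one_mulVec]
    exact eq_sub_of_add_eq hv.symm
  rw [hw, mulVec_mulVec, hM.tsum_pow_mul_one_sub, one_mulVec]

variable {P : Matrix n n ℝ} {β : ℝ}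

theorem smul_pow_apply_mem_Icc_of_mem_rowStochastic (hP : P ∈ rowStochastic ℝ n) (hβ : 0 ≤ β)
    (t : ℕ) (i j : n) : ((β • P) ^ t) i j ∈ Set.Icc 0 (β ^ t) := by
  have hPt := pow_mem hP t
  rw [smul_pow, smul_apply, smul_eq_mul]
  exact ⟨mul_nonneg (pow_nonneg hβ t) (nonneg_of_mem_rowStochastic hPt),
    mul_le_of_le_one_right (pow_nonneg hβ t) (le_one_of_mem_rowStochastic hPt)⟩

theorem summable_smul_pow_of_mem_rowStochastic (hP : P ∈ rowStochastic ℝ n) (hβ0 : 0 ≤ β)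
    (hβ1 : β < 1) : Summable ((β • P) ^ ·) :=
  Pi.summable.2 fun i => Pi.summable.2 fun j =>
    (summable_geometric_of_lt_one hβ0 hβ1).of_nonneg_of_le
      (fun t => (smul_pow_apply_mem_Icc_of_mem_rowStochastic hP hβ0 t i j).1)
      (fun t => (smul_pow_apply_mem_Icc_of_mem_rowStochastic hP hβ0 t i j).2)

theorem tsum_smul_pow_mulVec_one_of_mem_rowStochastic (hP : P ∈ rowStochastic ℝ n)
    (hβ0 : 0 ≤ β) (hβ1 : β < 1) : (∑' t, (β • P) ^ t) *ᵥ 1 = (1 - β)⁻¹ • 1 := by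
  refine (eq_tsum_pow_mulVec_of_eq_add_mulVec
    (summable_smul_pow_of_mem_rowStochastic hP hβ0 hβ1) ?_).symm
  have hβ : 1 - β ≠ 0 := by linarith
  rw [smul_mulVec, mulVec_smul, one_vecMul_of_mem_rowStochastic hP, smul_smul]
  ext i
  simp only [Pi.add_apply, Pi.smul_apply, Pi.one_apply, smul_eq_mul, mul_one]
  field_simp
  ring

end Matrix

section RobustMDP

variable {S A : Type*} [Fintype S] [Fintype A]

theorem pmat_mem_rowStochastic [DecidableEq S] {π : S → A → ℝ} {p : S → A → S → ℝ}
    (hπ : ∀ s, π s ∈ stdSimplex ℝ A) (hp : ∀ s a, p s a ∈ stdSimplex ℝ S) :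
    pmat π p ∈ rowStochastic ℝ S := by
  refine mem_rowStochastic_iff_sum.2 ⟨fun s s' => ?_, fun s => ?_⟩
  · exact sum_nonneg fun a _ => mul_nonneg ((hπ s).1 a) ((hp s a).1 s')
  · simp only [pmat, of_apply]
    rw [sum_comm]
    simp only [← mul_sum, (hp s _).2, mul_one, (hπ s).2]

theorem dvisit_eq_tsum_smul_pow_apply [DecidableEq S] {π : S → A → ℝ} {p : S → A → S → ℝ}
    (hπ : ∀ s, π s ∈ stdSimplex ℝ A) (hp : ∀ s a, p s a ∈ stdSimplex ℝ S) {γ R : ℝ}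
    (hβ0 : 0 ≤ γ * (1 - R)) (hβ1 : γ * (1 - R) < 1) (s s' : S) :
    dvisit γ R π p s s' = (1 - γ + γ * R) * (∑' t, ((γ * (1 - R)) • pmat π p) ^ t) s s' := by
  have hsum := summable_smul_pow_of_mem_rowStochastic (pmat_mem_rowStochastic hπ hp) hβ0 hβ1
  have hentry : (∑' t, ((γ * (1 - R)) • pmat π p) ^ t) s s'
      = ∑' t, (((γ * (1 - R)) • pmat π p) ^ t) s s' :=
    (congrFun (tsum_apply hsum) s').trans (tsum_apply (Pi.summable.1 hsum s))
  rw [hentry, dvisit]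
  simp only [smul_pow, Matrix.smul_apply, smul_eq_mul]

theorem value_sub_value_eq_add_mulVec {π₁ π₂ : S → A → ℝ} (hπ₂ : ∀ s, ∑ a, π₂ s a = 1)
    {c : S → A → ℝ} {p : S → A → S → ℝ} {β κ m₁ m₂ : ℝ} {V₁ V₂ : S → ℝ} {Q₁ : S → A → ℝ}
    (hV₁ : ∀ s, V₁ s = ∑ a, π₁ s a * Q₁ s a)
    (hV₂ : ∀ s, V₂ s = ∑ a, π₂ s a * (c s a + β * ∑ s', p s a s' * V₂ s' + κ * m₂))
    (hQ₁ : ∀ s a, Q₁ s a = c s a + β * ∑ s', p s a s' * V₁ s' + κ * m₁) :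
    V₁ - V₂ = (fun s => ∑ a, (π₁ s a - π₂ s a) * Q₁ s a + κ * (m₁ - m₂))
      + (β • pmat π₂ p) *ᵥ (V₁ - V₂) := by
  ext s
  have hP : (pmat π₂ p *ᵥ (V₁ - V₂)) s
      = ∑ a, π₂ s a * (∑ s', p s a s' * V₁ s' - ∑ s', p s a s' * V₂ s') := by
    simp only [mulVec, dotProduct, pmat, of_apply, Pi.sub_apply, sum_mul]
    rw [sum_comm]
    refine sum_congr rfl fun a _ => ?_
    rw [← sum_sub_distrib, mul_sum]
    exact sum_congr rfl fun s' _ => by ring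
  have hκ : κ * (m₁ - m₂) = ∑ a, π₂ s a * (κ * (m₁ - m₂)) := by rw [← sum_mul, hπ₂, one_mul]
  rw [Pi.add_apply, smul_mulVec, Pi.smul_apply, hP, Pi.sub_apply, hV₁, hV₂, hκ, smul_eq_mul,
    mul_sum, ← sum_add_distrib, ← sum_sub_distrib, ← sum_add_distrib]
  refine sum_congr rfl fun a _ => ?_
  rw [hQ₁]
  ring

end RobustMDP

theorem stmt_5_general {S A : Type*} [Fintype S] [Fintype A] [Nonempty S] [DecidableEq S]
    (c : S → A → ℝ)
    (γ : ℝ) (hγ : γ ∈ Set.Ico (0 : ℝ) 1)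
    (R : ℝ) (hR : R ∈ Set.Icc (0 : ℝ) 1)
    (p : S → A → S → ℝ) (hp : ∀ s a, p s a ∈ stdSimplex ℝ S)
    (π₁ π₂ : S → A → ℝ) (hπ₂ : ∀ s, π₂ s ∈ stdSimplex ℝ A)
    (V₁ V₂ : S → ℝ)
    (hV₁ : ∀ s, V₁ s = ∑ a, π₁ s a * (c s a + γ * (1 - R) * ∑ s', p s a s' * V₁ s'
      + γ * R * univ.sup' univ_nonempty V₁))
    (hV₂ : ∀ s, V₂ s = ∑ a, π₂ s a * (c s a + γ * (1 - R) * ∑ s', p s a s' * V₂ s'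
      + γ * R * univ.sup' univ_nonempty V₂))
    (Q₁ : S → A → ℝ)
    (hQ₁ : ∀ s a, Q₁ s a = c s a + γ * (1 - R) * ∑ s', p s a s' * V₁ s'
      + γ * R * univ.sup' univ_nonempty V₁)
    (s : S) :
    V₁ s - V₂ s = (1 / (1 - γ + γ * R)) *
        ∑ s', dvisit γ R π₂ p s s' * ∑ a, (π₁ s' a - π₂ s' a) * Q₁ s' a
      + (γ * R / (1 - γ + γ * R)) *
        (univ.sup' univ_nonempty V₁ - univ.sup' univ_nonempty V₂) := by
  obtain ⟨hγ0, hγ1⟩ := hγ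
  obtain ⟨hR0, hR1⟩ := hR
  have hβ0 : 0 ≤ γ * (1 - R) := mul_nonneg hγ0 (by linarith)
  have hβ1 : γ * (1 - R) < 1 := by nlinarith
  have hP := pmat_mem_rowStochastic hπ₂ hp
  have hgap := eq_tsum_pow_mulVec_of_eq_add_mulVec
    (summable_smul_pow_of_mem_rowStochastic hP hβ0 hβ1)
    (value_sub_value_eq_add_mulVec (π₁ := π₁) (fun s => (hπ₂ s).2)
      (fun s => (hV₁ s).trans (by simp only [hQ₁])) hV₂ hQ₁)
  have hrow := congrFun (tsum_smul_pow_mulVec_one_of_mem_rowStochastic hP hβ0 hβ1) s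
  simp only [dvisit_eq_tsum_smul_pow_apply hπ₂ hp hβ0 hβ1]
  set N := ∑' t, ((γ * (1 - R)) • pmat π₂ p) ^ t
  calc V₁ s - V₂ s = ∑ s', N s s' * ∑ a, (π₁ s' a - π₂ s' a) * Q₁ s' a
        + γ * R * (univ.sup' univ_nonempty V₁ - univ.sup' univ_nonempty V₂) * (N *ᵥ 1) s := by
        rw [← Pi.sub_apply, hgap]
        simp only [mulVec, dotProduct, mul_add, sum_add_distrib, Pi.one_apply, mul_one, mul_sum]
        exact congrArg _ (sum_congr rfl fun s' _ => by ring)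
    _ = _ := by
        rw [hrow]
        simp only [Pi.smul_apply, Pi.one_apply, smul_eq_mul, mul_one, mul_assoc, ← mul_sum]
        have hne : 1 - γ + γ * R ≠ 0 := by nlinarith
        rw [show 1 - γ * (1 - R) = 1 - γ + γ * R by ring]
        field_simp

/-- **Robust value-difference identity**: for stationary policies `π₁, π₂` with robust value
functions `V₁, V₂` (fixed points of the respective robust Bellman operators) and robust
action-value function `Q₁` of `π₁`, for every state `s`,
`V^{π₁}(s) - V^{π₂}(s) = (1/(1-γ+γR))·∑_{s'} d^{π₂}_s(s')·∑_a (π₁(a|s') - π₂(a|s'))·Q^{π₁}(s',a)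
  + (γR/(1-γ+γR))·(max V^{π₁} - max V^{π₂})`. -/
theorem stmt_5 {S A : Type*} [Fintype S] [Fintype A] [Nonempty S] [Nonempty A] [DecidableEq S]
    (c : S → A → ℝ) (hc : ∀ s a, c s a ∈ Set.Icc (0 : ℝ) 1)
    (γ : ℝ) (hγ : γ ∈ Set.Ico (0 : ℝ) 1)
    (R : ℝ) (hR : R ∈ Set.Icc (0 : ℝ) 1)
    (p : S → A → S → ℝ) (hp : ∀ s a, p s a ∈ stdSimplex ℝ S)
    (π₁ π₂ : S → A → ℝ) (hπ₁ : ∀ s, π₁ s ∈ stdSimplex ℝ A) (hπ₂ : ∀ s, π₂ s ∈ stdSimplex ℝ A)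
    (V₁ V₂ : S → ℝ)
    (hV₁ : ∀ s, V₁ s = ∑ a, π₁ s a * (c s a + γ * (1 - R) * ∑ s', p s a s' * V₁ s'
      + γ * R * univ.sup' univ_nonempty V₁))
    (hV₂ : ∀ s, V₂ s = ∑ a, π₂ s a * (c s a + γ * (1 - R) * ∑ s', p s a s' * V₂ s'
      + γ * R * univ.sup' univ_nonempty V₂))
    (Q₁ : S → A → ℝ)
    (hQ₁ : ∀ s a, Q₁ s a = c s a + γ * (1 - R) * ∑ s', p s a s' * V₁ s'
      + γ * R * univ.sup' univ_nonempty V₁)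
    (s : S) :
    V₁ s - V₂ s = (1 / (1 - γ + γ * R)) *
        ∑ s', dvisit γ R π₂ p s s' * ∑ a, (π₁ s' a - π₂ s' a) * Q₁ s' a
      + (γ * R / (1 - γ + γ * R)) *
        (univ.sup' univ_nonempty V₁ - univ.sup' univ_nonempty V₂) :=
  stmt_5_general c γ hγ R hR p hp π₁ π₂ hπ₂ V₁ V₂ hV₁ hV₂ Q₁ hQ₁ s
end
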